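/- arXiv:1605.01916 — 7 statements merged into one kernel-verified Lean document; each statement's English description precedes it below -/
import Mathlib

section
/- Let n be a positive integer, let Ψ_1,…,Ψ_n be linearly independent unit vectors in ℂ^d, and let p_1,…,p_n be strictly positive reals with Σ_k p_k = 1. Let W be the n×n complex matrix with entries W_{ij} = √(p_i p_j)·⟨Ψ_i, Ψ_j⟩. Then there exists a POVM (M_k)_{k=1}^n on ℂ^d such that Σ_{k=1}^n p_k ⟨Ψ_k, M_k Ψ_k⟩ ≥ (tr √W)² / n. -/
/-!
Put `φₖ = √pₖ Ψₖ` and let `Φ` be the matrix with columns `φₖ`, so that `W = Φᴴ Φ`. Linear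
independence makes `W` invertible, so `V = Φ W^{-1/2}` is an isometry with `Vᴴ Φ = √W`. The
square-root measurement `Mₖ = vₖ vₖᴴ` on the columns of `V`, with the leftover `1 - V Vᴴ` added to
one outcome, satisfies `pₖ ⟨Ψₖ, Mₖ Ψₖ⟩ ≥ |⟨vₖ, φₖ⟩|² = |(√W)ₖₖ|²`, and Cauchy–Schwarz gives
`∑ₖ |(√W)ₖₖ|² ≥ (tr √W)² / n`.
-/

open Matrix BigOperators
open scoped ComplexOrder

namespace Matrix.PosSemidef

/-- The positive semidefinite square root of a positive semidefinite matrix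
(the definition `Matrix.PosSemidef.sqrt` of the older Mathlib, removed since). -/
noncomputable def sqrt {n 𝕜 : Type*} [Fintype n] [DecidableEq n] [RCLike 𝕜]
    {A : Matrix n n 𝕜} (hA : A.PosSemidef) : Matrix n n 𝕜 :=
  hA.1.eigenvectorUnitary.1 * diagonal ((↑) ∘ (√·) ∘ hA.1.eigenvalues) *
  (star hA.1.eigenvectorUnitary : Matrix n n 𝕜)

end Matrix.PosSemidef

namespace Matrix

variable {𝕜 m ι : Type*} [RCLike 𝕜]

namespace PosSemidef

variable [Fintype ι] [DecidableEq ι] {A : Matrix ι ι 𝕜}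

theorem sqrt_conjTranspose (hA : A.PosSemidef) : hA.sqrtᴴ = hA.sqrt := by
  simp [sqrt, conjTranspose_mul, diagonal_conjTranspose, Matrix.mul_assoc, star_eq_conjTranspose,
    Pi.star_def, Function.comp_def]

theorem sqrt_mul_self (hA : A.PosSemidef) : hA.sqrt * hA.sqrt = A := by
  conv_rhs => rw [hA.1.spectral_theorem, Unitary.conjStarAlgAut_apply]
  simp only [sqrt, Matrix.mul_assoc]
  rw [← Matrix.mul_assoc (star _ : Matrix ι ι 𝕜) _ _, Unitary.coe_star_mul_self, Matrix.one_mul,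
    ← Matrix.mul_assoc (diagonal _), diagonal_mul_diagonal]
  congr 3
  ext i
  simp [← RCLike.ofReal_mul, Real.mul_self_sqrt (hA.eigenvalues_nonneg i)]

theorem isUnit_sqrt (hA : A.PosSemidef) (hA' : IsUnit A) : IsUnit hA.sqrt := by
  rw [isUnit_iff_isUnit_det] at hA' ⊢
  rw [← hA.sqrt_mul_self, det_mul] at hA'
  exact (IsUnit.mul_iff.1 hA').1

end PosSemidef

theorem star_dotProduct_vecMulVec_mulVec [Fintype m] (v x : m → 𝕜) :
    star x ⬝ᵥ vecMulVec v (star v) *ᵥ x = (‖star v ⬝ᵥ x‖ ^ 2 : 𝕜) := by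
  rw [vecMulVec_mulVec, dotProduct_smul, star_dotProduct x v, ← RCLike.mul_conj, op_smul_eq_mul,
    mul_comm, RCLike.star_def]

theorem sum_vecMulVec_col [Fintype ι] (V : Matrix m ι 𝕜) :
    ∑ k, vecMulVec (V.col k) (star (V.col k)) = V * Vᴴ := by
  ext i j
  simp [mul_apply, vecMulVec_apply, sum_apply]

theorem posSemidef_one_sub_mul_conjTranspose [Fintype m] [DecidableEq m] [Fintype ι]
    [DecidableEq ι] {V : Matrix m ι 𝕜} (hV : Vᴴ * V = 1) : (1 - V * Vᴴ).PosSemidef := by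
  have hP : IsStarProjection (V * Vᴴ) := by
    refine ⟨?_, ?_⟩
    · rw [IsIdempotentElem, Matrix.mul_assoc, ← Matrix.mul_assoc Vᴴ, hV, Matrix.one_mul]
    · simp [IsSelfAdjoint, star_eq_conjTranspose, conjTranspose_mul]
  open scoped MatrixOrder in exact hP.one_sub_nonneg.posSemidef

section POVM

variable [Fintype ι] [DecidableEq m] [DecidableEq ι]

def povmOfIsometry (V : Matrix m ι 𝕜) (k₀ k : ι) : Matrix m m 𝕜 :=
  vecMulVec (V.col k) (star (V.col k)) + if k = k₀ then 1 - V * Vᴴ else 0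

theorem sum_povmOfIsometry (V : Matrix m ι 𝕜) (k₀ : ι) : ∑ k, povmOfIsometry V k₀ k = 1 := by
  simp [povmOfIsometry, Finset.sum_add_distrib, sum_vecMulVec_col]

variable [Fintype m] {V : Matrix m ι 𝕜}

theorem posSemidef_ite_one_sub_mul_conjTranspose (hV : Vᴴ * V = 1) (k₀ k : ι) :
    (if k = k₀ then 1 - V * Vᴴ else 0 : Matrix m m 𝕜).PosSemidef := by
  split_ifs
  exacts [posSemidef_one_sub_mul_conjTranspose hV, .zero]

theorem posSemidef_povmOfIsometry (hV : Vᴴ * V = 1) (k₀ k : ι) :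
    (povmOfIsometry V k₀ k).PosSemidef :=
  (posSemidef_vecMulVec_self_star (V.col k)).add
    (posSemidef_ite_one_sub_mul_conjTranspose hV k₀ k)

theorem norm_sq_le_re_povmOfIsometry (hV : Vᴴ * V = 1) (k₀ k : ι) (x : m → 𝕜) :
    ‖star (V.col k) ⬝ᵥ x‖ ^ 2 ≤ RCLike.re (star x ⬝ᵥ povmOfIsometry V k₀ k *ᵥ x) := by
  rw [povmOfIsometry, add_mulVec, dotProduct_add, map_add, star_dotProduct_vecMulVec_mulVec]
  norm_cast
  exact le_add_of_nonneg_right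
    ((posSemidef_ite_one_sub_mul_conjTranspose hV k₀ k).re_dotProduct_nonneg x)

end POVM

section SquareRootMeasurement

variable [Fintype m] [Fintype ι] [DecidableEq ι]

noncomputable def gramSqrt (Φ : Matrix m ι 𝕜) : Matrix ι ι 𝕜 :=
  (posSemidef_conjTranspose_mul_self Φ).sqrt

theorem gramSqrt_conjTranspose (Φ : Matrix m ι 𝕜) : (gramSqrt Φ)ᴴ = gramSqrt Φ :=
  PosSemidef.sqrt_conjTranspose _

theorem gramSqrt_mul_self (Φ : Matrix m ι 𝕜) : gramSqrt Φ * gramSqrt Φ = Φᴴ * Φ :=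
  PosSemidef.sqrt_mul_self _

theorem isUnit_gramSqrt {Φ : Matrix m ι 𝕜} (hΦ : Function.Injective Φ.mulVec) :
    IsUnit (gramSqrt Φ) :=
  PosSemidef.isUnit_sqrt _ (PosDef.conjTranspose_mul_self Φ hΦ).isUnit

/-- The isometric factor `V` of the polar decomposition `Φ = V * gramSqrt Φ` of an injective `Φ`. -/
noncomputable def polarIsometry (Φ : Matrix m ι 𝕜) : Matrix m ι 𝕜 :=
  Φ * (gramSqrt Φ)⁻¹

variable {Φ : Matrix m ι 𝕜}

theorem conjTranspose_polarIsometry_mul (hΦ : Function.Injective Φ.mulVec) :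
    (polarIsometry Φ)ᴴ * Φ = gramSqrt Φ := by
  rw [polarIsometry, conjTranspose_mul, conjTranspose_nonsing_inv, gramSqrt_conjTranspose,
    Matrix.mul_assoc, ← gramSqrt_mul_self, ← Matrix.mul_assoc, nonsing_inv_mul _ ?_, Matrix.one_mul]
  exact (isUnit_iff_isUnit_det _).1 (isUnit_gramSqrt hΦ)

theorem conjTranspose_polarIsometry_mul_self (hΦ : Function.Injective Φ.mulVec) :
    (polarIsometry Φ)ᴴ * polarIsometry Φ = 1 := by
  calc (polarIsometry Φ)ᴴ * (Φ * (gramSqrt Φ)⁻¹) = (polarIsometry Φ)ᴴ * Φ * (gramSqrt Φ)⁻¹ :=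
        (Matrix.mul_assoc _ _ _).symm
    _ = 1 := by
      rw [conjTranspose_polarIsometry_mul hΦ,
        mul_nonsing_inv _ ((isUnit_iff_isUnit_det _).1 (isUnit_gramSqrt hΦ))]

theorem exists_povm_norm_gramSqrt_diag_sq_le [DecidableEq m] (hΦ : Function.Injective Φ.mulVec)
    (k₀ : ι) :
    ∃ M : ι → Matrix m m 𝕜, (∀ k, (M k).PosSemidef) ∧ ∑ k, M k = 1 ∧
      ∀ k, ‖gramSqrt Φ k k‖ ^ 2 ≤ RCLike.re (star (Φ.col k) ⬝ᵥ M k *ᵥ Φ.col k) := by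
  have hV := conjTranspose_polarIsometry_mul_self hΦ
  refine ⟨povmOfIsometry (polarIsometry Φ) k₀, posSemidef_povmOfIsometry hV k₀,
    sum_povmOfIsometry _ k₀, fun k => ?_⟩
  have hdiag : star ((polarIsometry Φ).col k) ⬝ᵥ Φ.col k = gramSqrt Φ k k := by
    rw [← conjTranspose_polarIsometry_mul hΦ]
    rfl
  simpa only [hdiag] using norm_sq_le_re_povmOfIsometry hV k₀ k (Φ.col k)

end SquareRootMeasurement

theorem re_trace_sq_le_card_mul_sum_norm_diag_sq [Fintype ι] (Q : Matrix ι ι 𝕜) :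
    RCLike.re Q.trace ^ 2 ≤ Fintype.card ι * ∑ k, ‖Q k k‖ ^ 2 := by
  calc RCLike.re Q.trace ^ 2 = (∑ k, RCLike.re (Q k k)) ^ 2 := by simp [trace]
    _ ≤ Fintype.card ι * ∑ k, RCLike.re (Q k k) ^ 2 := by
      simpa using sq_sum_le_card_mul_sum_sq (s := Finset.univ) (f := fun k => RCLike.re (Q k k))
    _ ≤ Fintype.card ι * ∑ k, ‖Q k k‖ ^ 2 := by
      refine mul_le_mul_of_nonneg_left (Finset.sum_le_sum fun k _ => ?_) (Nat.cast_nonneg _)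
      exact sq_le_sq' (neg_le_of_abs_le (RCLike.abs_re_le_norm (Q k k))) (RCLike.re_le_norm _)

end Matrix

theorem change_point_lower_bound_general
    (n d : ℕ) (hn : 0 < n)
    (Ψ : Fin n → (Fin d → ℂ))
    (hlin : LinearIndependent ℂ Ψ)
    (p : Fin n → ℝ) (hp : ∀ k, 0 < p k)
    (W : Matrix (Fin n) (Fin n) ℂ)
    (hWdef : ∀ i j, W i j = (Real.sqrt (p i * p j) : ℂ) * (star (Ψ i) ⬝ᵥ Ψ j))
    (hW : W.PosSemidef) :
    ∃ M : Fin n → Matrix (Fin d) (Fin d) ℂ,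
      (∀ k, (M k).PosSemidef) ∧ (∑ k, M k = 1) ∧
      (hW.sqrt.trace.re) ^ 2 / n ≤
        ∑ k, p k * (star (Ψ k) ⬝ᵥ ((M k).mulVec (Ψ k))).re := by
  set Φ : Matrix (Fin d) (Fin n) ℂ := of fun a k => (√(p k) : ℂ) * Ψ k a
  have hcol : ∀ k, Φ.col k = (√(p k) : ℂ) • Ψ k := fun k => rfl
  have hWΦ : W = Φᴴ * Φ := by
    ext i j
    rw [hWdef, Real.sqrt_mul (hp i).le, mul_apply, dotProduct, Finset.mul_sum]
    refine Finset.sum_congr rfl fun a _ => ?_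
    simp only [Complex.ofReal_mul, Pi.star_apply, RCLike.star_def, conjTranspose_apply, of_apply,
      star_mul', Complex.conj_ofReal, Φ]
    ring
  subst hWΦ
  have hΦ : Function.Injective Φ.mulVec := by
    rw [mulVec_injective_iff]
    exact hlin.units_smul fun k =>
      Units.mk0 (√(p k) : ℂ) (by simpa using (Real.sqrt_pos.2 (hp k)).ne')
  obtain ⟨M, hM, hsum, hle⟩ := exists_povm_norm_gramSqrt_diag_sq_le hΦ ⟨0, hn⟩
  refine ⟨M, hM, hsum, ?_⟩
  have hscale : ∀ k, (star (Φ.col k) ⬝ᵥ M k *ᵥ Φ.col k).re =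
      p k * (star (Ψ k) ⬝ᵥ M k *ᵥ Ψ k).re := by
    intro k
    simp [hcol, mulVec_smul, dotProduct_smul, ← mul_assoc, ← Complex.ofReal_mul,
      Real.mul_self_sqrt (hp k).le]
  rw [div_le_iff₀ (by positivity)]
  change (gramSqrt Φ).trace.re ^ 2 ≤ _
  calc (gramSqrt Φ).trace.re ^ 2 ≤ n * ∑ k, ‖gramSqrt Φ k k‖ ^ 2 := by
        simpa using re_trace_sq_le_card_mul_sum_norm_diag_sq (gramSqrt Φ)
    _ ≤ n * ∑ k, p k * (star (Ψ k) ⬝ᵥ M k *ᵥ Ψ k).re := by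
        gcongr with k
        simpa [hscale] using hle k
    _ = _ := mul_comm _ _

/-- lower bound on optimal discrimination probability, achieved by some POVM. -/
theorem change_point_lower_bound
    (n d : ℕ) (hn : 0 < n)
    (Ψ : Fin n → (Fin d → ℂ))
    (hlin : LinearIndependent ℂ Ψ)
    (hunit : ∀ k, star (Ψ k) ⬝ᵥ Ψ k = 1)
    (p : Fin n → ℝ) (hp : ∀ k, 0 < p k) (hpsum : ∑ k, p k = 1)
    (W : Matrix (Fin n) (Fin n) ℂ)
    (hWdef : ∀ i j, W i j = (Real.sqrt (p i * p j) : ℂ) * (star (Ψ i) ⬝ᵥ Ψ j))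
    (hW : W.PosSemidef) :
    ∃ M : Fin n → Matrix (Fin d) (Fin d) ℂ,
      (∀ k, (M k).PosSemidef) ∧ (∑ k, M k = 1) ∧
      (hW.sqrt.trace.re) ^ 2 / n ≤
        ∑ k, p k * (star (Ψ k) ⬝ᵥ ((M k).mulVec (Ψ k))).re :=
  change_point_lower_bound_general n d hn Ψ hlin p hp W hWdef hW
end

section
/- Let c be a real number with 0 ≤ c < 1 and let n be a positive integer. Let G be the n×n real matrix with entries G_{ij} = c^{|i−j|}, and let H be the n×n real matrix with entries H_{ij} = δ_{i,j+1} + δ_{j,i+1} + c(δ_{i,1}δ_{j,1} + δ_{i,n}δ_{j,n}). Then G is invertible and G⁻¹ = ((1+c²)/(1−c²))·I − (c/(1−c²))·H; equivalently, G · ( ((1+c²)/(1−c²))·I − (c/(1−c²))·H ) = I. -/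
/-!
Read `G_{ij} = c^{|i-j|}` also for the phantom columns `j = -1` and `j = n`. The corner entries
`c` of `H` supply exactly these phantom neighbours (`c · c^i = c^{i+1}` and
`c · c^{n-1-i} = c^{n-i}`), so `(G H)_{ij} = G_{i,j+1} + G_{i,j-1}` for every `j`. The
three-term identity `c · c^{|m+1|} + c · c^{|m-1|} = (1 + c²) c^{|m|} - (1 - c²) δ_{m0}`
then gives `G ((1 + c²) I - c H) = (1 - c²) I`.
-/

open Matrix Finset

variable {R : Type*} [CommRing R]

/-- The Kac–Murdock–Szegő matrix `(c ^ |i - j|)ᵢⱼ`. -/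
def kmsMatrix (c : R) (n : ℕ) : Matrix (Fin n) (Fin n) R :=
  of fun i j => c ^ Nat.dist i j

def pathCornerMatrix (c : R) (n : ℕ) : Matrix (Fin n) (Fin n) R :=
  of fun i j => (if i.1 = j.1 + 1 then 1 else 0) + (if j.1 = i.1 + 1 then 1 else 0)
    + c * ((if i.1 = 0 ∧ j.1 = 0 then 1 else 0) + (if i.1 = n - 1 ∧ j.1 = n - 1 then 1 else 0))

theorem mul_pow_dist_succ_add_mul_pow_succ_dist (c : R) (a b : ℕ) :
    c * c ^ Nat.dist a (b + 1) + c * c ^ Nat.dist (a + 1) b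
      = (1 + c ^ 2) * c ^ Nat.dist a b - if a = b then 1 - c ^ 2 else 0 := by
  rcases lt_trichotomy a b with h | rfl | h
  · obtain ⟨d, hd₁, hd₂, hd⟩ : ∃ d, Nat.dist a (b + 1) = d + 2 ∧ Nat.dist (a + 1) b = d ∧
        Nat.dist a b = d + 1 := ⟨b - a - 1, by unfold Nat.dist; omega⟩
    rw [hd₁, hd₂, hd, if_neg h.ne]
    ring
  · have hd₁ : Nat.dist a (a + 1) = 1 := by unfold Nat.dist; omega
    have hd₂ : Nat.dist (a + 1) a = 1 := by unfold Nat.dist; omega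
    rw [hd₁, hd₂, Nat.dist_self, if_pos rfl]
    ring
  · obtain ⟨d, hd₁, hd₂, hd⟩ : ∃ d, Nat.dist a (b + 1) = d ∧ Nat.dist (a + 1) b = d + 2 ∧
        Nat.dist a b = d + 1 := ⟨a - b - 1, by unfold Nat.dist; omega⟩
    rw [hd₁, hd₂, hd, if_neg h.ne']
    ring

/-- `Nat.dist (i + 1) j` is `|i - (j - 1)|` without truncated subtraction, so it is also right for
the phantom column `j - 1 = -1`. -/
theorem kmsMatrix_mul_pathCornerMatrix_apply (c : R) {n : ℕ} (i j : Fin n) :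
    (kmsMatrix c n * pathCornerMatrix c n) i j
      = c ^ Nat.dist i (j + 1) + c ^ Nat.dist (i + 1) j := by
  obtain ⟨a, ha⟩ := i
  obtain ⟨b, hb⟩ := j
  have hn : 0 < n := by omega
  simp only [mul_apply, kmsMatrix, pathCornerMatrix, of_apply]
  rw [Fin.sum_univ_eq_sum_range (fun k => c ^ Nat.dist a k *
    ((if k = b + 1 then 1 else 0) + (if b = k + 1 then 1 else 0)
      + c * ((if k = 0 ∧ b = 0 then 1 else 0) + (if k = n - 1 ∧ b = n - 1 then 1 else 0))))]
  simp only [mul_add, mul_ite, mul_one, mul_zero, sum_add_distrib, ite_and, sum_ite_eq',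
    mem_range, if_pos hn, if_pos (Nat.sub_lt hn one_pos)]
  have right : ((if b + 1 < n then c ^ Nat.dist a (b + 1) else 0) +
      if b = n - 1 then c ^ Nat.dist a (n - 1) * c else 0) = c ^ Nat.dist a (b + 1) := by
    by_cases hb' : b + 1 < n
    · rw [if_pos hb', if_neg (by omega), add_zero]
    · rw [if_neg hb', if_pos (by omega), zero_add, ← pow_succ]
      congr 1
      unfold Nat.dist
      omega
  have left : ((∑ k ∈ range n, if b = k + 1 then c ^ Nat.dist a k else 0) +
      if b = 0 then c ^ Nat.dist a 0 * c else 0) = c ^ Nat.dist (a + 1) b := by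
    rcases b with _ | b
    · simp [Nat.dist, pow_succ]
    · simp [Nat.dist, hb.trans']
  linear_combination right + left

theorem kmsMatrix_mul_smul_one_sub_smul_pathCornerMatrix (c : R) (n : ℕ) :
    kmsMatrix c n * ((1 + c ^ 2) • (1 : Matrix (Fin n) (Fin n) R) - c • pathCornerMatrix c n)
      = (1 - c ^ 2) • (1 : Matrix (Fin n) (Fin n) R) := by
  ext i j
  rw [Matrix.mul_sub, Matrix.mul_smul, Matrix.mul_smul, Matrix.mul_one, Matrix.sub_apply, Matrix.smul_apply,
    Matrix.smul_apply, kmsMatrix_mul_pathCornerMatrix_apply, Matrix.smul_apply, one_apply, kmsMatrix, of_apply,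
    smul_eq_mul, smul_eq_mul, smul_eq_mul, mul_add, mul_pow_dist_succ_add_mul_pow_succ_dist]
  simp only [Fin.val_inj]
  split_ifs <;> ring

theorem kmsMatrix_mul_eq_one {K : Type*} [Field K] (c : K) (hc : 1 - c ^ 2 ≠ 0) (n : ℕ) :
    kmsMatrix c n * (((1 + c ^ 2) / (1 - c ^ 2)) • (1 : Matrix (Fin n) (Fin n) K)
      - (c / (1 - c ^ 2)) • pathCornerMatrix c n) = 1 := by
  rw [div_eq_inv_mul, div_eq_inv_mul, ← smul_smul, ← smul_smul, ← smul_sub, Matrix.mul_smul,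
    kmsMatrix_mul_smul_one_sub_smul_pathCornerMatrix, smul_smul, inv_mul_cancel₀ hc, one_smul]

theorem gram_inverse_general
    (c : ℝ) (hc0 : 0 ≤ c) (hc1 : c < 1) (n : ℕ)
    (G H : Matrix (Fin n) (Fin n) ℝ)
    (hGdef : ∀ i j, G i j = c ^ Nat.dist i.1 j.1)
    (hHdef : ∀ i j, H i j =
      (if i.1 = j.1 + 1 then 1 else 0) + (if j.1 = i.1 + 1 then 1 else 0)
        + c * ((if i.1 = 0 ∧ j.1 = 0 then 1 else 0)
          + (if i.1 = n - 1 ∧ j.1 = n - 1 then 1 else 0))) :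
    IsUnit G ∧
    G⁻¹ = ((1 + c ^ 2) / (1 - c ^ 2)) • (1 : Matrix (Fin n) (Fin n) ℝ)
            - (c / (1 - c ^ 2)) • H ∧
    G * (((1 + c ^ 2) / (1 - c ^ 2)) • (1 : Matrix (Fin n) (Fin n) ℝ)
            - (c / (1 - c ^ 2)) • H) = 1 := by
  obtain rfl : G = kmsMatrix c n := ext hGdef
  obtain rfl : H = pathCornerMatrix c n := ext hHdef
  have hmul := kmsMatrix_mul_eq_one c (by nlinarith) n
  exact ⟨IsUnit.of_mul_eq_one _ hmul, inv_eq_right_inv hmul, hmul⟩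

/-- the inverse of the change point Gram matrix `G_{ij} = c^{|i-j|}` is
`((1+c²)/(1−c²))·I − (c/(1−c²))·H`. Indices of `Fin n` are 0-based, corresponding to
the 1-based indices `{1,…,n}` of the informal statement. -/
theorem gram_inverse
    (c : ℝ) (hc0 : 0 ≤ c) (hc1 : c < 1) (n : ℕ) (hn : 0 < n)
    (G H : Matrix (Fin n) (Fin n) ℝ)
    (hGdef : ∀ i j, G i j = c ^ Nat.dist i.1 j.1)
    (hHdef : ∀ i j, H i j =
      (if i.1 = j.1 + 1 then 1 else 0) + (if j.1 = i.1 + 1 then 1 else 0)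
        + c * ((if i.1 = 0 ∧ j.1 = 0 then 1 else 0)
          + (if i.1 = n - 1 ∧ j.1 = n - 1 then 1 else 0))) :
    IsUnit G ∧
    G⁻¹ = ((1 + c ^ 2) / (1 - c ^ 2)) • (1 : Matrix (Fin n) (Fin n) ℝ)
            - (c / (1 - c ^ 2)) • H ∧
    G * (((1 + c ^ 2) / (1 - c ^ 2)) • (1 : Matrix (Fin n) (Fin n) ℝ)
            - (c / (1 - c ^ 2)) • H) = 1 :=
  gram_inverse_general c hc0 hc1 n G H hGdef hHdef
end

section
/- Let c be a real number, n a positive integer, and x a real number satisfying U_n(x) − 2c·U_{n−1}(x) + c²·U_{n−2}(x) = 0. Define w ∈ ℝ^n by w_j = U_{j−1}(x) − c·U_{j−2}(x) for j = 1,…,n. Let H be the n×n real matrix with entries H_{ij} = δ_{i,j+1} + δ_{j,i+1} + c(δ_{i,1}δ_{j,1} + δ_{i,n}δ_{j,n}). Then w ≠ 0 (indeed w_1 = 1) and H w = 2x·w, i.e., w is an eigenvector of H with eigenvalue 2x. -/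
open Matrix BigOperators Polynomial

/-- if `x` is a root of `P_n = U_n − 2c U_{n−1} + c² U_{n−2}`, then the vector
`w_j = U_{j−1}(x) − c U_{j−2}(x)` (here `j : Fin n` is the 0-based version of `j ∈ {1,…,n}`,
so `w j = U_j(x) − c U_{j−1}(x)` with `j` 0-based) is a nonzero eigenvector of `H` with
eigenvalue `2x`; moreover its first component is `1`. -/
theorem eigenvector_of_H
    (c x : ℝ) (n : ℕ) (hn : 0 < n)
    (hroot : (Chebyshev.U ℝ (n : ℤ)).eval x
        - 2 * c * (Chebyshev.U ℝ ((n : ℤ) - 1)).eval x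
        + c ^ 2 * (Chebyshev.U ℝ ((n : ℤ) - 2)).eval x = 0)
    (w : Fin n → ℝ)
    (hw : ∀ j : Fin n, w j = (Chebyshev.U ℝ (j.1 : ℤ)).eval x
        - c * (Chebyshev.U ℝ ((j.1 : ℤ) - 1)).eval x)
    (H : Matrix (Fin n) (Fin n) ℝ)
    (hHdef : ∀ i j, H i j =
      (if i.1 = j.1 + 1 then 1 else 0) + (if j.1 = i.1 + 1 then 1 else 0)
        + c * ((if i.1 = 0 ∧ j.1 = 0 then 1 else 0)
          + (if i.1 = n - 1 ∧ j.1 = n - 1 then 1 else 0))) :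
    w ≠ 0 ∧ w ⟨0, hn⟩ = 1 ∧ H.mulVec w = (2 * x) • w := by
  have hrec : ∀ k : ℤ, (Chebyshev.U ℝ (k+1)).eval x
      = 2*x*(Chebyshev.U ℝ k).eval x - (Chebyshev.U ℝ (k-1)).eval x := by
    intro k
    have h := congrArg (Polynomial.eval x) (Polynomial.Chebyshev.U_add_two ℝ (k-1))
    have e1 : k - 1 + 2 = k + 1 := by ring
    have e2 : k - 1 + 1 = k := by ring
    rw [e1, e2] at h
    simpa using h
  have hw0 : w ⟨0, hn⟩ = 1 := by
    rw [hw]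
    norm_num [Polynomial.Chebyshev.U_zero, Polynomial.Chebyshev.U_neg_one]
  refine ⟨?_, hw0, ?_⟩
  · intro h
    rw [h] at hw0
    simp at hw0
  · funext i
    show ∑ j, H i j * w j = ((2*x) • w) i
    rw [Pi.smul_apply, smul_eq_mul]
    by_cases h0 : i.1 = 0
    · by_cases h1 : i.1 = n - 1
      · -- n = 1
        have hn1 : n = 1 := by omega
        subst hn1
        have hi : i = ⟨0, hn⟩ := Fin.ext h0
        rw [Finset.sum_eq_single_of_mem i (Finset.mem_univ i)
          (fun b _ hb => absurd (Fin.ext (by omega : b.1 = i.1)) hb)]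
        have hH : H i i = 2 * c := by
          rw [hHdef]; split_ifs <;> first | ring1 | (exfalso; first | assumption | exact And.right ‹_ ∧ False› | exact And.left ‹False ∧ _› | omega)
        rw [hH, hi, hw0]
        norm_num [Polynomial.Chebyshev.U_one, Polynomial.Chebyshev.U_zero,
          Polynomial.Chebyshev.U_neg_one] at hroot
        linarith
      · -- i = 0, n ≥ 2
        have hn2 : 2 ≤ n := by omega
        have h2 : (1:ℕ) < n := by omega
        set j0 : Fin n := ⟨0, hn⟩ with hj0
        set j1 : Fin n := ⟨1, h2⟩ with hj1
        have hv0 : j0.1 = 0 := rfl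
        have hv1 : j1.1 = 1 := rfl
        have hi : i = j0 := Fin.ext h0
        rw [Finset.sum_eq_add_of_mem j0 j1 (Finset.mem_univ _) (Finset.mem_univ _)
          (fun h => by rw [Fin.ext_iff, hv0, hv1] at h; omega)
          (fun j _ hj => by
            have hj' : j.1 ≠ 0 ∧ j.1 ≠ 1 := by
              rw [ne_eq, Fin.ext_iff, hv0] at hj
              rw [ne_eq, Fin.ext_iff, hv1] at hj
              exact hj
            have hHz : H i j = 0 := by
              rw [hHdef]; split_ifs <;> first | ring1 | (exfalso; first | assumption | exact And.right ‹_ ∧ False› | exact And.left ‹False ∧ _› | omega)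
            rw [hHz, zero_mul])]
        have hH0 : H i j0 = c := by
          rw [hHdef, hv0]; split_ifs <;> first | ring1 | (exfalso; first | assumption | exact And.right ‹_ ∧ False› | exact And.left ‹False ∧ _› | omega)
        have hH1 : H i j1 = 1 := by
          rw [hHdef, hv1]; split_ifs <;> first | ring1 | (exfalso; first | assumption | exact And.right ‹_ ∧ False› | exact And.left ‹False ∧ _› | omega)
        rw [hH0, hH1, hi, hw0, hw j1]
        have ec1 : ((j1.1 : ℕ) : ℤ) = 1 := by rw [hv1]; norm_num
        rw [ec1]
        norm_num [Polynomial.Chebyshev.U_one, Polynomial.Chebyshev.U_zero]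
    · by_cases h1 : i.1 = n - 1
      · -- i = n-1, n ≥ 2
        have hn2 : 2 ≤ n := by omega
        have hm2 : n - 2 < n := by omega
        have hm1 : n - 1 < n := by omega
        set j0 : Fin n := ⟨n - 2, hm2⟩ with hj0
        set j1 : Fin n := ⟨n - 1, hm1⟩ with hj1
        have hv0 : j0.1 = n - 2 := rfl
        have hv1 : j1.1 = n - 1 := rfl
        have hi : i = j1 := Fin.ext h1
        rw [Finset.sum_eq_add_of_mem j0 j1 (Finset.mem_univ _) (Finset.mem_univ _)
          (fun h => by rw [Fin.ext_iff, hv0, hv1] at h; omega)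
          (fun j _ hj => by
            have hj' : j.1 ≠ n - 2 ∧ j.1 ≠ n - 1 := by
              rw [ne_eq, Fin.ext_iff, hv0] at hj
              rw [ne_eq, Fin.ext_iff, hv1] at hj
              exact hj
            have hHz : H i j = 0 := by
              rw [hHdef]; split_ifs <;> first | ring1 | (exfalso; first | assumption | exact And.right ‹_ ∧ False› | exact And.left ‹False ∧ _› | omega)
            rw [hHz, zero_mul])]
        have hH0 : H i j0 = 1 := by
          rw [hHdef, hv0]; split_ifs <;> first | ring1 | (exfalso; first | assumption | exact And.right ‹_ ∧ False› | exact And.left ‹False ∧ _› | omega)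
        have hH1 : H i j1 = c := by
          rw [hHdef, hv1]; split_ifs <;> first | ring1 | (exfalso; first | assumption | exact And.right ‹_ ∧ False› | exact And.left ‹False ∧ _› | omega)
        rw [hH0, hH1, hi, hw j0, hw j1]
        have ec0 : ((j0.1 : ℕ) : ℤ) = (n : ℤ) - 2 := by rw [hv0]; omega
        have ec1 : ((j1.1 : ℕ) : ℤ) = (n : ℤ) - 1 := by rw [hv1]; omega
        rw [ec0, ec1]
        have e3 : (n : ℤ) - 2 - 1 = (n : ℤ) - 3 := by ring
        have e4 : (n : ℤ) - 1 - 1 = (n : ℤ) - 2 := by ring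
        rw [e3, e4]
        have hr1 : (Chebyshev.U ℝ (n : ℤ)).eval x
            = 2*x*(Chebyshev.U ℝ ((n:ℤ)-1)).eval x - (Chebyshev.U ℝ ((n:ℤ)-2)).eval x := by
          have h := hrec ((n:ℤ)-1)
          have e1 : (n:ℤ) - 1 + 1 = (n:ℤ) := by ring
          have e2 : (n:ℤ) - 1 - 1 = (n:ℤ) - 2 := by ring
          rw [e1, e2] at h; exact h
        have hr2 : (Chebyshev.U ℝ ((n:ℤ)-1)).eval x
            = 2*x*(Chebyshev.U ℝ ((n:ℤ)-2)).eval x - (Chebyshev.U ℝ ((n:ℤ)-3)).eval x := by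
          have h := hrec ((n:ℤ)-2)
          have e1 : (n:ℤ) - 2 + 1 = (n:ℤ) - 1 := by ring
          have e2 : (n:ℤ) - 2 - 1 = (n:ℤ) - 3 := by ring
          rw [e1, e2] at h; exact h
        linear_combination (-1) * hroot + hr1 - c * hr2
      · -- middle: 0 < i.1 < n - 1
        have hii : 0 < i.1 ∧ i.1 + 1 < n := by
          have := i.2; omega
        have hm0 : i.1 - 1 < n := by omega
        set j0 : Fin n := ⟨i.1 - 1, hm0⟩ with hj0
        set j1 : Fin n := ⟨i.1 + 1, hii.2⟩ with hj1
        have hv0 : j0.1 = i.1 - 1 := rfl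
        have hv1 : j1.1 = i.1 + 1 := rfl
        rw [Finset.sum_eq_add_of_mem j0 j1 (Finset.mem_univ _) (Finset.mem_univ _)
          (fun h => by rw [Fin.ext_iff, hv0, hv1] at h; omega)
          (fun j _ hj => by
            have hj' : j.1 ≠ i.1 - 1 ∧ j.1 ≠ i.1 + 1 := by
              rw [ne_eq, Fin.ext_iff, hv0] at hj
              rw [ne_eq, Fin.ext_iff, hv1] at hj
              exact hj
            have hHz : H i j = 0 := by
              rw [hHdef]; split_ifs <;> first | ring1 | (exfalso; first | assumption | exact And.right ‹_ ∧ False› | exact And.left ‹False ∧ _› | omega)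
            rw [hHz, zero_mul])]
        have hH0 : H i j0 = 1 := by
          rw [hHdef, hv0]; split_ifs <;> first | ring1 | (exfalso; first | assumption | exact And.right ‹_ ∧ False› | exact And.left ‹False ∧ _› | omega)
        have hH1 : H i j1 = 1 := by
          rw [hHdef, hv1]; split_ifs <;> first | ring1 | (exfalso; first | assumption | exact And.right ‹_ ∧ False› | exact And.left ‹False ∧ _› | omega)
        rw [hH0, hH1, hw j0, hw j1, hw i]
        have ec0 : ((j0.1 : ℕ) : ℤ) = (i.1 : ℤ) - 1 := by rw [hv0]; omega
        have ec1 : ((j1.1 : ℕ) : ℤ) = (i.1 : ℤ) + 1 := by rw [hv1]; omega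
        rw [ec0, ec1]
        have e3 : (i.1 : ℤ) - 1 - 1 = (i.1 : ℤ) - 2 := by ring
        have e4 : (i.1 : ℤ) + 1 - 1 = (i.1 : ℤ) := by ring
        rw [e3, e4]
        have hr1 := hrec (i.1 : ℤ)
        have hr2 : (Chebyshev.U ℝ ((i.1:ℤ))).eval x
            = 2*x*(Chebyshev.U ℝ ((i.1:ℤ)-1)).eval x - (Chebyshev.U ℝ ((i.1:ℤ)-2)).eval x := by
          have h := hrec ((i.1:ℤ)-1)
          have e1 : (i.1:ℤ) - 1 + 1 = (i.1:ℤ) := by ring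
          have e2 : (i.1:ℤ) - 1 - 1 = (i.1:ℤ) - 2 := by ring
          rw [e1, e2] at h; exact h
        linear_combination hr1 - c * hr2
end

section
/- Let c be a real number and n a positive integer, and let H be the n×n real matrix with entries H_{ij} = δ_{i,j+1} + δ_{j,i+1} + c(δ_{i,1}δ_{j,1} + δ_{i,n}δ_{j,n}). Then for every real x, det(2x·I − H) = U_n(x) − 2c·U_{n−1}(x) + c²·U_{n−2}(x). -/
open Matrix BigOperators Polynomial


noncomputable def uu (x : ℝ) (k : ℤ) : ℝ := (Chebyshev.U ℝ k).eval x

def TT (x c d : ℝ) (n : ℕ) : Matrix (Fin n) (Fin n) ℝ :=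
  Matrix.of fun i j =>
    (if (i : ℕ) = j then 2 * x else 0)
    - (if (i : ℕ) + 1 = j ∨ (j : ℕ) + 1 = i then 1 else 0)
    - (if (i : ℕ) = 0 ∧ (j : ℕ) = 0 then c else 0)
    - (if (i : ℕ) = n - 1 ∧ (j : ℕ) = n - 1 then d else 0)

set_option maxHeartbeats 1000000 in
lemma det_TT_rec (x c d : ℝ) (n : ℕ) :
    (TT x c d (n + 2)).det = (2 * x - c) * (TT x 0 d (n + 1)).det - (TT x 0 d n).det := by
  rw [Matrix.det_succ_row_zero, Fin.sum_univ_succ, Fin.sum_univ_succ]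
  have hz : ∀ j : Fin n, TT x c d (n + 2) 0 j.succ.succ = 0 := by
    intro j
    simp only [TT, Matrix.of_apply, Fin.val_zero, Fin.val_succ]
    split_ifs <;> first | ring1 | omega | simp_all
  have hsum0 : ∑ j : Fin n,
      (-1 : ℝ) ^ ((j.succ.succ : Fin (n+2)) : ℕ) * TT x c d (n + 2) 0 j.succ.succ *
        ((TT x c d (n+2)).submatrix Fin.succ (Fin.succAbove j.succ.succ)).det = 0 := by
    apply Finset.sum_eq_zero
    intro j _
    rw [hz j]; ring
  rw [hsum0]
  have h00 : TT x c d (n + 2) 0 0 = 2 * x - c := by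
    simp only [TT, Matrix.of_apply, Fin.val_zero]
    split_ifs <;> first | ring1 | omega | simp_all
  have h01 : TT x c d (n + 2) 0 (0 : Fin (n+1)).succ = -1 := by
    simp only [TT, Matrix.of_apply, Fin.val_zero, Fin.val_succ]
    split_ifs <;> first | ring1 | omega | simp_all
  have hsub0 : (TT x c d (n+2)).submatrix Fin.succ (Fin.succAbove 0) = TT x 0 d (n+1) := by
    ext i j
    simp only [TT, Matrix.submatrix_apply, Matrix.of_apply, Fin.succAbove_zero, Fin.val_succ]
    have hi := i.isLt; have hj := j.isLt
    split_ifs <;> first | ring1 | omega | simp_all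
  have hBdet : ((TT x c d (n+2)).submatrix Fin.succ (Fin.succAbove (0 : Fin (n+1)).succ)).det
      = - (TT x 0 d n).det := by
    set B := (TT x c d (n+2)).submatrix Fin.succ (Fin.succAbove (0 : Fin (n+1)).succ) with hB
    rw [Matrix.det_succ_column_zero, Fin.sum_univ_succ]
    have hB0 : B 0 0 = -1 := by
      simp only [hB, TT, Matrix.submatrix_apply, Matrix.of_apply, Fin.val_succ,
        Fin.succAbove, Fin.lt_def, Fin.val_zero, Fin.castSucc_zero, Fin.val_one]
      split_ifs <;> first | ring1 | omega | simp_all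
    have hBz : ∀ i : Fin n, B i.succ 0 = 0 := by
      intro i
      simp only [hB, TT, Matrix.submatrix_apply, Matrix.of_apply, Fin.val_succ,
        Fin.succAbove, Fin.lt_def, Fin.val_zero, Fin.castSucc_zero, Fin.val_one]
      split_ifs <;> first | ring1 | omega | simp_all
    have hsumz : ∑ i : Fin n,
        (-1 : ℝ) ^ ((i.succ : Fin (n+1)) : ℕ) * B i.succ 0 *
          (B.submatrix (Fin.succAbove i.succ) Fin.succ).det = 0 := by
      apply Finset.sum_eq_zero
      intro i _
      rw [hBz i]; ring
    rw [hsumz]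
    have hsub : B.submatrix (Fin.succAbove 0) Fin.succ = TT x 0 d n := by
      ext i j
      simp only [hB, TT, Matrix.submatrix_apply, Matrix.of_apply, Fin.succAbove_zero,
        Fin.val_succ, Fin.succAbove, Fin.lt_def, Fin.val_zero, Fin.castSucc_zero, Fin.val_one]
      have hi := i.isLt; have hj := j.isLt
      split_ifs <;> first | ring1 | omega | simp_all
    rw [hsub, hB0]
    simp
  rw [h00, h01, hsub0, hBdet]
  simp only [Fin.val_zero, Fin.val_succ, pow_zero, pow_one]
  ring

lemma uu_zero (x : ℝ) : uu x 0 = 1 := by simp [uu]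
lemma uu_one (x : ℝ) : uu x 1 = 2 * x := by simp [uu, Chebyshev.U_one]
lemma uu_neg_one (x : ℝ) : uu x (-1) = 0 := by simp [uu, Chebyshev.U_neg_one]
lemma uu_rec (x : ℝ) (k : ℤ) : uu x (k + 2) = 2 * x * uu x (k + 1) - uu x k := by
  simp [uu, Chebyshev.U_add_two]

lemma det_TT_zero (x d : ℝ) :
    ∀ n : ℕ, (TT x 0 d n).det = uu x n - d * uu x ((n : ℤ) - 1) := by
  intro n
  induction n using Nat.twoStepInduction with
  | zero =>
    simp [Matrix.det_fin_zero, uu_zero, uu_neg_one]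
  | one =>
    rw [Matrix.det_fin_one]
    simp only [TT, Matrix.of_apply, Fin.val_zero]
    norm_num [uu_zero, uu_one]
  | more n ih1 ih2 =>
    rw [det_TT_rec, ih1, ih2]
    have e1 := uu_rec x (n : ℤ)
    have e2 := uu_rec x ((n : ℤ) - 1)
    push_cast
    have h2 : ((n : ℤ) - 1 + 2) = (n : ℤ) + 1 := by ring
    have h3 : ((n : ℤ) - 1 + 1) = (n : ℤ) := by ring
    rw [h2, h3] at e2
    have h4 : ((n : ℤ) + 1 - 1) = (n : ℤ) := by ring
    have h5 : ((n : ℤ) + 2 - 1) = (n : ℤ) + 1 := by ring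
    rw [h4, h5]
    linear_combination -e1 + d * e2

lemma det_TT (x c d : ℝ) (n : ℕ) (hn : 0 < n) :
    (TT x c d n).det =
      uu x n - (c + d) * uu x ((n : ℤ) - 1) + c * d * uu x ((n : ℤ) - 2) := by
  match n, hn with
  | 1, _ =>
    rw [Matrix.det_fin_one]
    simp only [TT, Matrix.of_apply, Fin.val_zero]
    norm_num [uu_zero, uu_one, uu_neg_one]
    ring
  | (m + 2), _ =>
    rw [det_TT_rec, det_TT_zero, det_TT_zero]
    have e1 := uu_rec x (m : ℤ)
    have e2 := uu_rec x ((m : ℤ) - 1)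
    push_cast
    have h2 : ((m : ℤ) - 1 + 2) = (m : ℤ) + 1 := by ring
    have h3 : ((m : ℤ) - 1 + 1) = (m : ℤ) := by ring
    rw [h2, h3] at e2
    have h4 : ((m : ℤ) + 1 - 1) = (m : ℤ) := by ring
    have h5 : ((m : ℤ) + 2 - 1) = (m : ℤ) + 1 := by ring
    have h6 : ((m : ℤ) + 2 - 2) = (m : ℤ) := by ring
    rw [h4, h5, h6]
    linear_combination -e1 + d * e2

/-- the characteristic polynomial identity
`det(2x·I − H) = U_n(x) − 2c U_{n−1}(x) + c² U_{n−2}(x)`. -/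
theorem charpoly_of_H
    (c : ℝ) (n : ℕ) (hn : 0 < n)
    (H : Matrix (Fin n) (Fin n) ℝ)
    (hHdef : ∀ i j, H i j =
      (if i.1 = j.1 + 1 then 1 else 0) + (if j.1 = i.1 + 1 then 1 else 0)
        + c * ((if i.1 = 0 ∧ j.1 = 0 then 1 else 0)
          + (if i.1 = n - 1 ∧ j.1 = n - 1 then 1 else 0)))
    (x : ℝ) :
    ((2 * x) • (1 : Matrix (Fin n) (Fin n) ℝ) - H).det =
      (Chebyshev.U ℝ (n : ℤ)).eval x
        - 2 * c * (Chebyshev.U ℝ ((n : ℤ) - 1)).eval x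
        + c ^ 2 * (Chebyshev.U ℝ ((n : ℤ) - 2)).eval x := by
  have hM : (2 * x) • (1 : Matrix (Fin n) (Fin n) ℝ) - H = TT x c c n := by
    ext i j
    simp only [Matrix.sub_apply, Matrix.smul_apply, Matrix.one_apply, smul_eq_mul,
      hHdef, TT, Matrix.of_apply, Fin.ext_iff]
    split_ifs <;> first | ring1 | omega
  rw [hM, det_TT x c c n hn]
  simp only [uu]
  ring
end

section
/- Let c be a real number with 0 < c < 1 and let n be a positive integer. Then for every l ∈ {1,…,n} there exists θ_l ∈ ((l−1)π/n, lπ/n) such that U_n(cos θ_l) − 2c·U_{n−1}(cos θ_l) + c²·U_{n−2}(cos θ_l) = 0. In particular the polynomial P_n(x) = U_n(x) − 2c·U_{n−1}(x) + c²·U_{n−2}(x) has n distinct roots of the form cos θ with θ ∈ (0, π), one in each of the n intervals partitioning (0, π) into pieces of length π/n. -/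
/-!
Since `U_m(cos θ) sin θ = sin((m+1)θ)`, we have
`P_n(cos θ) sin θ = sin((n+1)θ) - 2c sin(nθ) + c² sin((n-1)θ)`, which at a node `θ = kπ/n`,
`0 < k < n`, equals `(-1)^k (1 - c²) sin θ`. Together with `P_n(1) = n(1-c)² + 1 - c²` and
`P_n(-1) = (-1)^n (n(1+c)² + 1 - c²)`, this shows that `(-1)^k P_n(cos(kπ/n)) > 0` for all
`0 ≤ k ≤ n` when `|c| < 1`, and the intermediate value theorem gives a root of `θ ↦ P_n(cos θ)`
strictly between any two consecutive nodes.
-/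

open Polynomial Real

noncomputable def changePointPoly (c : ℝ) (n : ℤ) : ℝ[X] :=
  Chebyshev.U ℝ n - C (2 * c) * Chebyshev.U ℝ (n - 1) + C (c ^ 2) * Chebyshev.U ℝ (n - 2)

namespace changePointPoly

variable (c : ℝ)

@[simp]
theorem eval_eq (n : ℤ) (x : ℝ) :
    (changePointPoly c n).eval x = (Chebyshev.U ℝ n).eval x
      - 2 * c * (Chebyshev.U ℝ (n - 1)).eval x + c ^ 2 * (Chebyshev.U ℝ (n - 2)).eval x := by
  simp [changePointPoly]

theorem eval_one (n : ℤ) : (changePointPoly c n).eval 1 = n * (1 - c) ^ 2 + (1 - c ^ 2) := by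
  simp only [eval_eq, Chebyshev.U_eval_one]
  push_cast
  ring

theorem eval_neg_one (n : ℤ) :
    (changePointPoly c n).eval (-1) = (-1) ^ n * (n * (1 + c) ^ 2 + (1 - c ^ 2)) := by
  simp only [eval_eq, Chebyshev.U_eval_neg_one, Int.negOnePow_sub, Int.negOnePow_one,
    Int.negOnePow_even 2 even_two]
  push_cast [Int.cast_negOnePow]
  ring

theorem eval_cos_mul_sin (n : ℤ) (θ : ℝ) :
    (changePointPoly c n).eval (cos θ) * sin θ
      = sin ((n + 1) * θ) - 2 * c * sin (n * θ) + c ^ 2 * sin ((n - 1) * θ) := by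
  have h₀ := Chebyshev.U_real_cos θ n
  have h₁ := Chebyshev.U_real_cos θ (n - 1)
  have h₂ := Chebyshev.U_real_cos θ (n - 2)
  rw [eval_eq]
  push_cast at h₁ h₂
  ring_nf at h₀ h₁ h₂ ⊢
  linear_combination h₀ - 2 * c * h₁ + c ^ 2 * h₂

theorem eval_cos_of_mul_eq_int_mul_pi {n k : ℤ} {θ : ℝ} (hθ : n * θ = k * π) (hsin : sin θ ≠ 0) :
    (changePointPoly c n).eval (cos θ) = (-1) ^ k * (1 - c ^ 2) := by
  apply mul_right_cancel₀ hsin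
  rw [eval_cos_mul_sin, hθ, show (n + 1) * θ = θ + k * π by linear_combination hθ,
    show (n - 1) * θ = -(θ - k * π) by linear_combination hθ, sin_add_int_mul_pi, sin_int_mul_pi,
    sin_neg, sin_sub_int_mul_pi]
  ring

variable {c} in
theorem neg_one_pow_mul_eval_cos_pos (hc : |c| < 1) {n k : ℕ} (hn : 0 < n) (hk : k ≤ n) :
    0 < (-1) ^ k * (changePointPoly c n).eval (cos (k * π / n)) := by
  have hc2 : 0 < 1 - c ^ 2 := by nlinarith [abs_nonneg c, sq_abs c]
  have hn' : (n : ℝ) ≠ 0 := by positivity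
  rcases hk.eq_or_lt with rfl | hkn
  · rw [mul_div_cancel_left₀ _ hn', cos_pi, eval_neg_one, ← mul_assoc, Int.cast_natCast,
      zpow_natCast, ← mul_pow, neg_one_mul, neg_neg, one_pow, one_mul]
    positivity
  rcases k.eq_zero_or_pos with rfl | hk0
  · simp only [pow_zero, Nat.cast_zero, zero_mul, zero_div, cos_zero, one_mul]
    rw [eval_one]
    positivity
  have hθ : (n : ℤ) * (k * π / n : ℝ) = (k : ℤ) * π := by push_cast; field_simp
  have hsin : 0 < sin (k * π / n) := by
    apply sin_pos_of_pos_of_lt_pi (by positivity)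
    rw [div_lt_iff₀ (by positivity), mul_comm π]
    gcongr
  rw [eval_cos_of_mul_eq_int_mul_pi c hθ hsin.ne', zpow_natCast, ← mul_assoc, ← mul_pow,
    neg_one_mul, neg_neg, one_pow, one_mul]
  exact hc2

end changePointPoly

theorem roots_of_Pn_in_intervals_general
    (c : ℝ) (hc0 : 0 < c) (hc1 : c < 1) (n : ℕ) :
    ∀ l : ℕ, 1 ≤ l → l ≤ n →
      ∃ θ : ℝ, θ ∈ Set.Ioo (((l : ℝ) - 1) * π / n) ((l : ℝ) * π / n) ∧
        (Chebyshev.U ℝ (n : ℤ)).eval (Real.cos θ)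
          - 2 * c * (Chebyshev.U ℝ ((n : ℤ) - 1)).eval (Real.cos θ)
          + c ^ 2 * (Chebyshev.U ℝ ((n : ℤ) - 2)).eval (Real.cos θ) = 0 := by
  intro l hl1 hln
  obtain ⟨k, rfl⟩ := Nat.exists_eq_add_of_le' hl1
  have hn : 0 < n := by omega
  have hc : |c| < 1 := abs_lt.mpr ⟨by linarith, hc1⟩
  let g : ℝ → ℝ := fun θ => (-1) ^ (k + 1) * (changePointPoly c n).eval (cos θ)
  have hleft : g (k * π / n) < 0 := by
    have := changePointPoly.neg_one_pow_mul_eval_cos_pos hc hn (k := k) (by omega)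
    simp only [g, pow_succ, mul_neg_one, neg_mul]
    linarith
  have hright : 0 < g ((k + 1 : ℕ) * π / n) :=
    changePointPoly.neg_one_pow_mul_eval_cos_pos hc hn hln
  have hcont : Continuous g := by fun_prop
  obtain ⟨θ, hθ, hgθ⟩ := intermediate_value_Ioo (by gcongr; simp) hcont.continuousOn
    ⟨hleft, hright⟩
  refine ⟨θ, by simpa using hθ, ?_⟩
  simpa [g] using hgθ

/-- for `0 < c < 1`, the polynomial `P_n = U_n − 2c U_{n−1} + c² U_{n−2}` has a
root `cos θ_l` with `θ_l` in the open interval `((l−1)π/n, lπ/n)`, for each `l ∈ {1,…,n}`.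
Since these intervals are pairwise disjoint, this produces `n` distinct roots. -/
theorem roots_of_Pn_in_intervals
    (c : ℝ) (hc0 : 0 < c) (hc1 : c < 1) (n : ℕ) (hn : 0 < n) :
    ∀ l : ℕ, 1 ≤ l → l ≤ n →
      ∃ θ : ℝ, θ ∈ Set.Ioo (((l : ℝ) - 1) * π / n) ((l : ℝ) * π / n) ∧
        (Chebyshev.U ℝ (n : ℤ)).eval (Real.cos θ)
          - 2 * c * (Chebyshev.U ℝ ((n : ℤ) - 1)).eval (Real.cos θ)
          + c ^ 2 * (Chebyshev.U ℝ ((n : ℤ) - 2)).eval (Real.cos θ) = 0 :=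
  roots_of_Pn_in_intervals_general c hc0 hc1 n
end

section
/- Fix a real number c with 0 ≤ c ≤ 1 and set s = √(1−c²). In ℂ² with orthonormal basis |0⟩, |1⟩ let |φ⟩ = c|0⟩ + s|1⟩, and for 1 ≤ k ≤ n let |Ψ_k⟩ ∈ (ℂ²)^{⊗n} be the source state |Ψ_k⟩ = |0⟩^{⊗(k−1)} ⊗ |φ⟩^{⊗(n−k+1)}. Then the Gram matrix of these states is ⟨Ψ_i, Ψ_j⟩ = c^{|i−j|} for all i, j ∈ {1,…,n}. -/
/-!
Each source state is a product state `|0⟩^{⊗k} ⊗ |φ⟩^{⊗(n-k)}`, so the inner product of two of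
them factors over the sites. A site contributes `⟨0|0⟩ = ⟨φ|φ⟩ = 1` when it carries the same
vector in both states and `⟨0|φ⟩ = ⟨φ|0⟩ = c` otherwise; the mixed sites are exactly those
between the two change points, and there are `|i - j|` of them.
-/

open Finset

theorem sum_star_prod_mul_prod {ι α R : Type*} [Fintype ι] [DecidableEq ι] [Fintype α]
    [CommSemiring R] [StarRing R] (u v : ι → α → R) :
    ∑ f : ι → α, star (∏ i, u i (f i)) * ∏ i, v i (f i) = ∏ i, star (u i) ⬝ᵥ v i := by
  simp only [star_prod, ← prod_mul_distrib, dotProduct, Pi.star_apply]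
  exact (Fintype.prod_sum fun i x => star (u i x) * v i x).symm

theorem not_lt_iff_lt_iff_mem_Ico {α : Type*} [LinearOrder α] [LocallyFiniteOrder α] (a b p : α) :
    ¬(p < a ↔ p < b) ↔ p ∈ Ico (min a b) (max a b) := by
  rw [mem_Ico, min_le_iff, lt_max_iff]
  grind

theorem Fin.prod_ite_lt_iff_lt {M : Type*} [CommMonoid M] {n : ℕ} (x : M) (i j : Fin n) :
    ∏ p : Fin n, (if p < i ↔ p < j then 1 else x) = x ^ Nat.dist i j := by
  have hmixed : ({p | ¬(p < i ↔ p < j)} : Finset (Fin n)) = Ico (min i j) (max i j) := by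
    ext p
    simp [not_lt_iff_lt_iff_mem_Ico]
  rw [prod_ite, prod_const_one, one_mul, Finset.prod_const, hmixed, Fin.card_Ico, Fin.coe_max,
    Fin.coe_min, Nat.dist]
  congr 1
  omega

theorem sum_star_prod_mul_prod_ite_lt {α R : Type*} [Fintype α] [CommSemiring R] [StarRing R]
    {n : ℕ} {u v : α → R} {x : R} (huu : star u ⬝ᵥ u = 1) (hvv : star v ⬝ᵥ v = 1)
    (huv : star u ⬝ᵥ v = x) (hvu : star v ⬝ᵥ u = x) (i j : Fin n) :
    ∑ f : Fin n → α, star (∏ p, (if p < i then u else v) (f p)) *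
        ∏ p, (if p < j then u else v) (f p) = x ^ Nat.dist i j := by
  rw [sum_star_prod_mul_prod, ← Fin.prod_ite_lt_iff_lt]
  refine prod_congr rfl fun p _ => ?_
  by_cases hi : p < i <;> by_cases hj : p < j <;> simp [hi, hj, huu, hvv, huv, hvu]

def ketZero : Fin 2 → ℂ := fun x => if x = 0 then 1 else 0

def ketPhi (c s : ℝ) : Fin 2 → ℂ := fun x => if x = 0 then (c : ℂ) else (s : ℂ)

theorem star_ketZero_dotProduct_ketZero : star ketZero ⬝ᵥ ketZero = 1 := by
  simp [ketZero, dotProduct]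

theorem star_ketZero_dotProduct_ketPhi (c s : ℝ) : star ketZero ⬝ᵥ ketPhi c s = c := by
  simp [ketZero, ketPhi, dotProduct]

theorem star_ketPhi_dotProduct_ketZero (c s : ℝ) : star (ketPhi c s) ⬝ᵥ ketZero = c := by
  simp [ketZero, ketPhi, dotProduct]

theorem star_ketPhi_dotProduct_ketPhi (c s : ℝ) :
    star (ketPhi c s) ⬝ᵥ ketPhi c s = ((c ^ 2 + s ^ 2 : ℝ) : ℂ) := by
  simp [ketPhi, dotProduct, sq]

/-- the Gram matrix of the change point source states
`|Ψ_k⟩ = |0⟩^{⊗(k−1)} ⊗ |φ⟩^{⊗(n−k+1)}` with `|φ⟩ = c|0⟩ + s|1⟩`, `s = √(1−c²)`, is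
`⟨Ψ_i, Ψ_j⟩ = c^{|i−j|}`.  The tensor product `(ℂ²)^{⊗n}` is realized as the space of
functions `(Fin n → Fin 2) → ℂ`; indices `k : Fin n` are the 0-based versions of the
1-based `k ∈ {1,…,n}`, so positions `j < k` carry `|0⟩` and positions `j ≥ k` carry `|φ⟩`. -/
theorem gram_matrix_of_source_states
    (c : ℝ) (hc0 : 0 ≤ c) (hc1 : c ≤ 1) (s : ℝ) (hs : s = Real.sqrt (1 - c ^ 2))
    (n : ℕ)
    (Ψ : Fin n → (Fin n → Fin 2) → ℂ)
    (hΨ : ∀ (k : Fin n) (f : Fin n → Fin 2),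
      Ψ k f = ∏ j : Fin n,
        (if j < k then (if f j = 0 then (1 : ℂ) else 0)
         else (if f j = 0 then (c : ℂ) else (s : ℂ)))) :
    ∀ i j : Fin n,
      (∑ f : Fin n → Fin 2, (starRingEnd ℂ) (Ψ i f) * Ψ j f) =
        (c : ℂ) ^ Nat.dist i.1 j.1 := by
  intro i j
  have hnorm : c ^ 2 + s ^ 2 = 1 := by
    rw [hs, Real.sq_sqrt (by nlinarith)]
    ring
  have hprod : ∀ k f, Ψ k f = ∏ p, (if p < k then ketZero else ketPhi c s) (f p) := by
    intro k f
    simp only [hΨ, ite_apply]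
    rfl
  simp only [hprod]
  refine sum_star_prod_mul_prod_ite_lt star_ketZero_dotProduct_ketZero ?_
    (star_ketZero_dotProduct_ketPhi c s) (star_ketPhi_dotProduct_ketZero c s) i j
  rw [star_ketPhi_dotProduct_ketPhi, hnorm, Complex.ofReal_one]
end

section
/- Let c be a real number with 0 ≤ c ≤ 1, set s² = 1 − c², and let n be a positive integer. For each k ∈ {1,…,n} consider independent {0,1}-valued random variables X_k, X_{k+1}, …, X_n, each equal to 1 with probability s², and define the guess ĝ as the smallest index j ∈ {k,…,n} with X_j = 1 if such an index exists, and ĝ = n otherwise. Then the average success probability of this basic local strategy, (1/n) Σ_{k=1}^n P(ĝ = k under the model with change point at k), equals 1 − c² + c²/n. -/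
/-!
For change point `k`, the guess is correct exactly when the first measured outcome `X_k` is `1`,
or when `k = n` (then every outcome leads to the guess `n`). By independence of the outcomes
the success probability is therefore `s²` for `k < n` and `1` for `k = n`, and the average
over `k` is `((n - 1) s² + 1) / n = s² + c² / n`.
-/

open Finset

section IndependentBits

variable {ι R : Type*} [Fintype ι] [DecidableEq ι] [CommSemiring R] (w : Bool → R)

theorem sum_prod_apply_eq_pow : ∑ ω : ι → Bool, ∏ j, w (ω j) = (∑ b, w b) ^ Fintype.card ι := by
  rw [← Fintype.prod_sum (fun _ => w), prod_const, card_univ]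

theorem sum_prod_mul_apply (g : Bool → R) (i : ι) :
    ∑ ω : ι → Bool, (∏ j, w (ω j)) * g (ω i) =
      (∑ b, w b * g b) * (∑ b, w b) ^ (Fintype.card ι - 1) := by
  calc ∑ ω : ι → Bool, (∏ j, w (ω j)) * g (ω i)
      = ∑ ω : ι → Bool, w (ω i) * g (ω i) * ∏ j : {j // j ≠ i}, w (ω j) := by
        refine sum_congr rfl fun ω _ => ?_
        rw [Fintype.prod_eq_mul_prod_subtype_ne _ i]
        ring
    _ = ∑ p : Bool × ({j // j ≠ i} → Bool), w p.1 * g p.1 * ∏ j, w (p.2 j) :=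
        (Equiv.funSplitAt i Bool).sum_comp (fun p => w p.1 * g p.1 * ∏ j, w (p.2 j))
    _ = (∑ b, w b * g b) * ∑ ω : {j // j ≠ i} → Bool, ∏ j, w (ω j) := by
        rw [Fintype.sum_prod_type, sum_mul_sum]
    _ = (∑ b, w b * g b) * (∑ b, w b) ^ (Fintype.card ι - 1) := by
        rw [sum_prod_apply_eq_pow, Fintype.card_subtype_compl, Fintype.card_subtype_eq]

end IndependentBits

theorem Fin.sum_ite_val_eq_sub_one {M : Type*} [AddCommMonoid M] {n : ℕ} (hn : 0 < n) (a b : M) :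
    ∑ k : Fin n, (if (k : ℕ) = n - 1 then a else b) = a + (n - 1) • b := by
  obtain ⟨m, rfl⟩ := Nat.exists_eq_add_one_of_ne_zero hn.ne'
  simp [Fin.sum_univ_castSucc, add_comm, fun x : Fin m => x.isLt.ne]

section BasicLocalStrategy

variable {n : ℕ}

def firstTrueOrLast (hn : 0 < n) (k : Fin n) (ω : {j : Fin n // k ≤ j} → Bool) : Fin n :=
  if h : (univ.filter fun j : {j : Fin n // k ≤ j} => ω j = true).Nonempty
  then ((univ.filter fun j : {j : Fin n // k ≤ j} => ω j = true).min' h).1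
  else ⟨n - 1, Nat.sub_lt hn Nat.one_pos⟩

theorem firstTrueOrLast_eq_self_iff (hn : 0 < n) (k : Fin n) (ω : {j : Fin n // k ≤ j} → Bool) :
    firstTrueOrLast hn k ω = k ↔ (k : ℕ) = n - 1 ∨ ω ⟨k, le_rfl⟩ = true := by
  unfold firstTrueOrLast
  set S := univ.filter fun j : {j : Fin n // k ≤ j} => ω j = true
  split_ifs with h
  · have hmin : ω (S.min' h) = true := (mem_filter.mp (S.min'_mem h)).2
    constructor
    · intro hmin_eq
      rw [show S.min' h = ⟨k, le_rfl⟩ from Subtype.ext hmin_eq] at hmin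
      exact .inr hmin
    · rintro (hlast | hk)
      · have hle : k ≤ (S.min' h).1 := (S.min' h).2
        have hlt := (S.min' h).1.isLt
        rw [Fin.le_def] at hle
        exact Fin.ext (by omega)
      · exact le_antisymm (S.min'_le ⟨k, le_rfl⟩ (by simp [S, hk])) (S.min' h).2
  · have hk : ω ⟨k, le_rfl⟩ ≠ true := fun hk => h ⟨⟨k, le_rfl⟩, by simp [S, hk]⟩
    simp [hk, Fin.ext_iff, eq_comm]

end BasicLocalStrategy

/-- the basic local strategy for the change point succeeds with average
probability `1 − c² + c²/n`.  When the change point is at position `k` (0-based `k : Fin n`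
for the 1-based `k ∈ {1,…,n}`), the measurement outcomes at positions `j ≥ k` are independent
Bernoulli variables `ω j` with success probability `s² = 1 − c²`; the guess is the smallest
position `j ≥ k` with `ω j = true`, and the last position `n` (0-based `n−1`) if there is
none.  The success probability for change point `k` is written as a sum over all outcome
configurations `ω`, weighted by their probabilities. -/
theorem basic_local_strategy_success_probability
    (c : ℝ) (n : ℕ) (hn : 0 < n)
    (guess : (k : Fin n) → ({j : Fin n // k ≤ j} → Bool) → Fin n)
    (hguess : ∀ (k : Fin n) (ω : {j : Fin n // k ≤ j} → Bool),
      guess k ω =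
        if h : (Finset.univ.filter fun j : {j : Fin n // k ≤ j} => ω j = true).Nonempty
        then ((Finset.univ.filter fun j : {j : Fin n // k ≤ j} => ω j = true).min' h).1
        else ⟨n - 1, by omega⟩) :
    (1 / n : ℝ) *
        ∑ k : Fin n, ∑ ω : {j : Fin n // k ≤ j} → Bool,
          (∏ j : {j : Fin n // k ≤ j}, (if ω j then 1 - c ^ 2 else c ^ 2)) *
            (if guess k ω = k then 1 else 0) =
      1 - c ^ 2 + c ^ 2 / n := by
  have hguess_eq : ∀ k ω, guess k ω = firstTrueOrLast hn k ω := hguess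
  have hsuccess : ∀ k : Fin n,
      ∑ ω : {j : Fin n // k ≤ j} → Bool,
          (∏ j, (if ω j then 1 - c ^ 2 else c ^ 2)) * (if guess k ω = k then 1 else 0) =
        if (k : ℕ) = n - 1 then 1 else 1 - c ^ 2 := by
    intro k
    simp_rw [hguess_eq, firstTrueOrLast_eq_self_iff]
    rw [sum_prod_mul_apply (fun b => if b then 1 - c ^ 2 else c ^ 2)
      (fun b => if (k : ℕ) = n - 1 ∨ b = true then 1 else 0) (⟨k, le_rfl⟩ : {j : Fin n // k ≤ j})]
    split_ifs with hk <;> simp [hk]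
  rw [sum_congr rfl fun k _ => hsuccess k, Fin.sum_ite_val_eq_sub_one hn, nsmul_eq_mul,
    Nat.cast_pred hn]
  field_simp
  ring
end
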